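/- Let λ > 0 and let (S₁, δu₁), …, (S_N, δu_N) be independent, identically distributed pairs of real-valued random variables such that almost surely S_i ≥ 0, S_i is integrable, δu_i is independent of S_i, E[δu_i] = 0, and E[(δu_i)²] < ∞. Set ω_i = exp(−S_i/λ), let m = E[ω₁] (so m > 0), let Ê₂ = (1/N)·Σ_{i=1}^{N} ω_i·δu_i / m and E₂ = E[ω₁·δu₁]/m. Then for every ε > 0, ℙ( |Ê₂ − E₂| ≥ ε ) ≤ (4·Var[δu₁]/(N·ε²))·exp( 2·E[S₁]/λ ). -/

import Mathlib

/-!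
The weights `ωᵢ = exp (-Sᵢ/λ)` lie in `(0, 1]` and are independent of the zero-mean `δuᵢ`, so
the summands `ωᵢ δuᵢ` are pairwise independent, identically distributed, centred, and have
variance at most `E[δu₁²] = Var[δu₁]`. Hence `E₂ = 0` and Chebyshev's inequality for the sample
mean gives the bound `Var[δu₁] / (N ε² m²)`. Jensen's inequality for `exp` yields
`m ≥ exp (-E[S₁]/λ)`, i.e. `m⁻² ≤ exp (2 E[S₁]/λ)`; the factor `4` is slack.
-/

open MeasureTheory ProbabilityTheory

/-- The variance `E[Z²] − (E[Z])²` of a real-valued random variable. -/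
noncomputable def rvVar {Ω : Type*} [MeasurableSpace Ω] (μ : Measure Ω) (Z : Ω → ℝ) : ℝ :=
  (∫ x, (Z x) ^ 2 ∂μ) - (∫ x, Z x ∂μ) ^ 2

namespace MeasureTheory

variable {Ω : Type*} [MeasurableSpace Ω] {μ : Measure Ω}

lemma MemLp.mul_of_abs_le_one {p : ENNReal} {X Y : Ω → ℝ} (hY : MemLp Y p μ)
    (hX : AEStronglyMeasurable X μ) (hX1 : ∀ᵐ x ∂μ, |X x| ≤ 1) : MemLp (X * Y) p μ :=
  hY.mono (hX.mul hY.1) <| hX1.mono fun x hx => by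
    simpa [abs_mul] using mul_le_of_le_one_left (abs_nonneg (Y x)) hx

lemma exp_integral_le_integral_exp [IsProbabilityMeasure μ] {f : Ω → ℝ} (hf : Integrable f μ)
    (hexp : Integrable (fun x => Real.exp (f x)) μ) :
    Real.exp (∫ x, f x ∂μ) ≤ ∫ x, Real.exp (f x) ∂μ :=
  convexOn_exp.map_integral_le Real.continuous_exp.continuousOn isClosed_univ
    (ae_of_all _ fun _ => trivial) hf hexp

end MeasureTheory

namespace ProbabilityTheory

variable {Ω : Type*} [MeasurableSpace Ω] {μ : Measure Ω}

lemma variance_mul_le_integral_sq [IsProbabilityMeasure μ] {X Y : Ω → ℝ}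
    (hX : AEStronglyMeasurable X μ) (hX1 : ∀ᵐ x ∂μ, |X x| ≤ 1) (hY : MemLp Y 2 μ) :
    variance (X * Y) μ ≤ ∫ x, Y x ^ 2 ∂μ :=
  calc variance (X * Y) μ ≤ μ[(X * Y) ^ 2] := variance_le_expectation_sq (hX.mul hY.1)
    _ ≤ ∫ x, Y x ^ 2 ∂μ := by
      refine integral_mono_ae (hY.mul_of_abs_le_one hX hX1).integrable_sq hY.integrable_sq ?_
      filter_upwards [hX1] with x hx
      simp only [Pi.pow_apply, Pi.mul_apply, mul_pow]
      exact mul_le_of_le_one_left (sq_nonneg _) (sq_le_one_iff_abs_le_one _ |>.2 hx)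

lemma variance_sum_of_identDistrib {ι : Type*} (s : Finset ι) {Y : ι → Ω → ℝ} {Z : Ω → ℝ}
    (hY : ∀ i ∈ s, MemLp (Y i) 2 μ) (hindep : Set.Pairwise ↑s fun i j => IndepFun (Y i) (Y j) μ)
    (hident : ∀ i ∈ s, IdentDistrib (Y i) Z μ μ) :
    variance (∑ i ∈ s, Y i) μ = s.card * variance Z μ := by
  rw [IndepFun.variance_sum hY hindep, Finset.sum_congr rfl fun i hi => (hident i hi).variance_eq,
    Finset.sum_const, nsmul_eq_mul]

lemma measureReal_abs_const_mul_sum_ge_le [IsFiniteMeasure μ] {ι : Type*} [Fintype ι]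
    {Y : ι → Ω → ℝ} {Z : Ω → ℝ} (hY : ∀ i, MemLp (Y i) 2 μ)
    (hindep : Pairwise fun i j => IndepFun (Y i) (Y j) μ) (hident : ∀ i, IdentDistrib (Y i) Z μ μ)
    (hmean : ∀ i, μ[Y i] = 0) (a : ℝ) {c : ℝ} (hc : 0 < c) :
    μ.real {x | c ≤ |a * ∑ i, Y i x|} ≤ a ^ 2 * (Fintype.card ι * variance Z μ) / c ^ 2 := by
  set X : Ω → ℝ := ∑ i, Y i
  have hX : MemLp X 2 μ := memLp_finsetSum' _ fun i _ => hY i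
  have hX_mean : μ[fun x => a * X x] = 0 := by
    simp only [X, Finset.sum_apply, integral_const_mul, hmean, Finset.sum_const_zero, mul_zero,
      integral_finsetSum _ fun i _ => (hY i).integrable one_le_two]
  have hX_var : variance (fun x => a * X x) μ = a ^ 2 * (Fintype.card ι * variance Z μ) := by
    rw [variance_const_mul, variance_sum_of_identDistrib _ (fun i _ => hY i)
      (fun i _ j _ hij => hindep hij) (fun i _ => hident i), Finset.card_univ]
  have hcheb := meas_ge_le_variance_div_sq (hX.const_mul a) hc
  rw [hX_mean, hX_var] at hcheb
  have hset : {x | c ≤ |a * ∑ i, Y i x|} = {x | c ≤ |a * X x - 0|} := by simp [X]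
  rw [Measure.real, hset]
  have hvar_nonneg := variance_nonneg Z μ
  exact ENNReal.toReal_le_of_le_ofReal (by positivity) hcheb

end ProbabilityTheory

section Weights

open Real

variable {Ω : Type*} [MeasurableSpace Ω] {μ : Measure Ω} {S δu : Ω → ℝ} {lam : ℝ}

lemma rvVar_eq_integral_sq (hδu0 : μ[δu] = 0) : rvVar μ δu = ∫ x, δu x ^ 2 ∂μ := by
  simp [rvVar, hδu0]

lemma MeasureTheory.AEStronglyMeasurable.exp_neg_div (hS : AEStronglyMeasurable S μ) :
    AEStronglyMeasurable (fun x => exp (-S x / lam)) μ :=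
  (hS.aemeasurable.neg.div_const lam).exp.aestronglyMeasurable

lemma ae_abs_exp_neg_div_le_one (hS0 : ∀ᵐ x ∂μ, 0 ≤ S x) (hlam : 0 ≤ lam) :
    ∀ᵐ x ∂μ, |exp (-S x / lam)| ≤ 1 :=
  hS0.mono fun x hx => by
    rw [abs_of_pos (exp_pos _), exp_le_one_iff]
    exact div_nonpos_of_nonpos_of_nonneg (neg_nonpos.2 hx) hlam

lemma integral_exp_neg_div_mul_eq_zero (hindep : IndepFun S δu μ)
    (hS : AEStronglyMeasurable S μ) (hδu : AEStronglyMeasurable δu μ) (hδu0 : μ[δu] = 0) :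
    ∫ x, exp (-S x / lam) * δu x ∂μ = 0 := by
  have hindep_exp : IndepFun (fun x => exp (-S x / lam)) δu μ :=
    hindep.comp (φ := fun s => exp (-s / lam)) (by fun_prop) measurable_id
  rw [hindep_exp.integral_fun_mul_eq_mul_integral hS.exp_neg_div hδu, hδu0, mul_zero]

lemma memLp_exp_neg_div_mul (hS : AEStronglyMeasurable S μ) (hS0 : ∀ᵐ x ∂μ, 0 ≤ S x)
    (hlam : 0 ≤ lam) (hδu : MemLp δu 2 μ) : MemLp (fun x => exp (-S x / lam) * δu x) 2 μ :=
  hδu.mul_of_abs_le_one hS.exp_neg_div (ae_abs_exp_neg_div_le_one hS0 hlam)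

lemma variance_exp_neg_div_mul_le [IsProbabilityMeasure μ] (hS : AEStronglyMeasurable S μ)
    (hS0 : ∀ᵐ x ∂μ, 0 ≤ S x) (hlam : 0 ≤ lam) (hδu : MemLp δu 2 μ) (hδu0 : μ[δu] = 0) :
    variance (fun x => exp (-S x / lam) * δu x) μ ≤ rvVar μ δu :=
  rvVar_eq_integral_sq hδu0 ▸
    variance_mul_le_integral_sq hS.exp_neg_div (ae_abs_exp_neg_div_le_one hS0 hlam) hδu

lemma inv_sq_integral_exp_neg_div_le [IsProbabilityMeasure μ] (hS : Integrable S μ)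
    (hS0 : ∀ᵐ x ∂μ, 0 ≤ S x) (hlam : 0 ≤ lam) :
    ((∫ x, exp (-S x / lam) ∂μ) ^ 2)⁻¹ ≤ exp (2 * (∫ x, S x ∂μ) / lam) := by
  have hjensen := exp_integral_le_integral_exp (f := fun x => -S x / lam) (hS.neg.div_const lam)
    (.of_bound hS.1.exp_neg_div 1 (ae_abs_exp_neg_div_le_one hS0 hlam))
  rw [integral_div, integral_neg] at hjensen
  calc ((∫ x, exp (-S x / lam) ∂μ) ^ 2)⁻¹
      ≤ (exp (-(∫ x, S x ∂μ) / lam) ^ 2)⁻¹ := by gcongr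
    _ = exp (2 * (∫ x, S x ∂μ) / lam) := by
      rw [← exp_nat_mul, ← exp_neg]
      congr 1
      push_cast
      ring

end Weights

theorem chebyshev_weighted_update_general {Ω : Type*} [MeasurableSpace Ω] (μ : Measure Ω)
    [IsProbabilityMeasure μ] (lam : ℝ) (hlam : 0 < lam)
    (N : ℕ) (hN : 0 < N) (S δu : Fin N → Ω → ℝ)
    (hiid_indep : iIndepFun (fun i x => (S i x, δu i x)) μ)
    (hiid_ident : ∀ i, IdentDistrib (fun x => (S i x, δu i x))
      (fun x => (S ⟨0, hN⟩ x, δu ⟨0, hN⟩ x)) μ μ)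
    (hS0 : ∀ i, ∀ᵐ x ∂μ, 0 ≤ S i x) (hSint : ∀ i, Integrable (S i) μ)
    (hindep : ∀ i, IndepFun (S i) (δu i) μ)
    (hδu0 : ∀ i, ∫ x, δu i x ∂μ = 0) (hδu2 : ∀ i, MemLp (δu i) 2 μ)
    (m : ℝ) (hm : m = ∫ x, Real.exp (-S ⟨0, hN⟩ x / lam) ∂μ)
    (E₂ : ℝ) (hE₂ : E₂ = (∫ x, Real.exp (-S ⟨0, hN⟩ x / lam) * δu ⟨0, hN⟩ x ∂μ) / m)
    (ε : ℝ) (hε : 0 < ε) :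
    (μ {x | ε ≤ |(1 / (N : ℝ)) * ∑ i, Real.exp (-S i x / lam) * δu i x / m - E₂|}).toReal ≤
      4 * rvVar μ (δu ⟨0, hN⟩) / ((N : ℝ) * ε ^ 2) *
        Real.exp (2 * (∫ x, S ⟨0, hN⟩ x ∂μ) / lam) := by
  set i₀ : Fin N := ⟨0, hN⟩
  set Y : Fin N → Ω → ℝ := fun i x => Real.exp (-S i x / lam) * δu i x
  have hY_mean : ∀ i, μ[Y i] = 0 := fun i =>
    integral_exp_neg_div_mul_eq_zero (hindep i) (hSint i).1 (hδu2 i).1 (hδu0 i)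
  have hE₂_zero : E₂ = 0 := by rw [hE₂, hY_mean i₀, zero_div]
  have hφ : Measurable fun p : ℝ × ℝ => Real.exp (-p.1 / lam) * p.2 := by fun_prop
  have hcheb := measureReal_abs_const_mul_sum_ge_le (Z := Y i₀)
    (fun i => memLp_exp_neg_div_mul (hSint i).1 (hS0 i) hlam.le (hδu2 i))
    (fun i j hij => (hiid_indep.indepFun hij).comp hφ hφ) (fun i => (hiid_ident i).comp hφ)
    hY_mean ((N : ℝ) * m)⁻¹ hε
  have hvar : variance (Y i₀) μ ≤ rvVar μ (δu i₀) :=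
    variance_exp_neg_div_mul_le (hSint i₀).1 (hS0 i₀) hlam.le (hδu2 i₀) (hδu0 i₀)
  have hm_inv : (m ^ 2)⁻¹ ≤ Real.exp (2 * (∫ x, S i₀ x ∂μ) / lam) := hm ▸
    inv_sq_integral_exp_neg_div_le (hSint i₀) (hS0 i₀) hlam.le
  have hV_nonneg : 0 ≤ rvVar μ (δu i₀) := (variance_nonneg _ _).trans hvar
  have hestimator : ∀ x, (1 / (N : ℝ)) * ∑ i, Real.exp (-S i x / lam) * δu i x / m - E₂ =
      ((N : ℝ) * m)⁻¹ * ∑ i, Y i x := fun x => by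
    rw [hE₂_zero, sub_zero, ← Finset.sum_div, mul_inv]
    ring
  calc (μ {x | ε ≤ |(1 / (N : ℝ)) * ∑ i, Real.exp (-S i x / lam) * δu i x / m - E₂|}).toReal
      = μ.real {x | ε ≤ |((N : ℝ) * m)⁻¹ * ∑ i, Y i x|} := by simp only [hestimator, Measure.real]
    _ ≤ ((N : ℝ) * m)⁻¹ ^ 2 * (N * variance (Y i₀) μ) / ε ^ 2 := by simpa using hcheb
    _ = variance (Y i₀) μ / (N * ε ^ 2) * (m ^ 2)⁻¹ := by field_simp
    _ ≤ rvVar μ (δu i₀) / (N * ε ^ 2) * Real.exp (2 * (∫ x, S i₀ x ∂μ) / lam) := by gcongr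
    _ ≤ 4 * rvVar μ (δu i₀) / (N * ε ^ 2) * Real.exp (2 * (∫ x, S i₀ x ∂μ) / lam) := by
        gcongr
        linarith

/-- Chebyshev concentration bound for the Monte Carlo estimate of the importance-weighted
control update: for i.i.d. pairs `(Sᵢ, δuᵢ)` with `Sᵢ ≥ 0`, `δuᵢ` zero-mean,
square-integrable and independent of `Sᵢ`, with `ωᵢ = exp(−Sᵢ/λ)`, `m = E[ω₁]`,
`Ê₂ = (1/N)·Σᵢ ωᵢ·δuᵢ/m` and `E₂ = E[ω₁·δu₁]/m`, one has
`ℙ(|Ê₂ − E₂| ≥ ε) ≤ (4·Var[δu₁]/(N·ε²))·exp(2·E[S₁]/λ)`. -/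
theorem chebyshev_weighted_update {Ω : Type*} [MeasurableSpace Ω] (μ : Measure Ω)
    [IsProbabilityMeasure μ] (lam : ℝ) (hlam : 0 < lam)
    (N : ℕ) (hN : 0 < N) (S δu : Fin N → Ω → ℝ)
    (hSm : ∀ i, Measurable (S i)) (hδum : ∀ i, Measurable (δu i))
    (hiid_indep : iIndepFun (fun i x => (S i x, δu i x)) μ)
    (hiid_ident : ∀ i, IdentDistrib (fun x => (S i x, δu i x))
      (fun x => (S ⟨0, hN⟩ x, δu ⟨0, hN⟩ x)) μ μ)
    (hS0 : ∀ i, ∀ᵐ x ∂μ, 0 ≤ S i x) (hSint : ∀ i, Integrable (S i) μ)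
    (hindep : ∀ i, IndepFun (S i) (δu i) μ)
    (hδu0 : ∀ i, ∫ x, δu i x ∂μ = 0) (hδu2 : ∀ i, MemLp (δu i) 2 μ)
    (m : ℝ) (hm : m = ∫ x, Real.exp (-S ⟨0, hN⟩ x / lam) ∂μ)
    (E₂ : ℝ) (hE₂ : E₂ = (∫ x, Real.exp (-S ⟨0, hN⟩ x / lam) * δu ⟨0, hN⟩ x ∂μ) / m)
    (ε : ℝ) (hε : 0 < ε) :
    (μ {x | ε ≤ |(1 / (N : ℝ)) * ∑ i, Real.exp (-S i x / lam) * δu i x / m - E₂|}).toReal ≤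
      4 * rvVar μ (δu ⟨0, hN⟩) / ((N : ℝ) * ε ^ 2) *
        Real.exp (2 * (∫ x, S ⟨0, hN⟩ x ∂μ) / lam) :=
  chebyshev_weighted_update_general μ lam hlam N hN S δu hiid_indep hiid_ident hS0 hSint hindep hδu0
    hδu2 m hm E₂ hE₂ ε hε
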